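/- arXiv:2410.05845 — 6 statements merged into one kernel-verified Lean document; each statement's English description precedes it below -/
import Mathlib

section
/- Let R be a commutative ring, ε ∈ R with ε² = 1, S an associative R-algebra, and Q₀, Q₁, Q₂, Q₃ ∈ S elements satisfying the A1_ε relations. Then the Casimir element c := Q₀² + ε·Q₁² + Q₂² + Q₃² commutes with each of Q₀, Q₁, Q₂, Q₃. -/
/-- **The Casimir of `A1_ε` is central.**  Let `R` be a commutative ring, `ε ∈ R`
with `ε² = 1`, `S` an associative `R`-algebra and `Q₀, Q₁, Q₂, Q₃ ∈ S` satisfying the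
`A1_ε` relations.  Then `c = Q₀² + ε·Q₁² + Q₂² + Q₃²` commutes with every `Q_k`. -/
theorem A1eps_casimir_central
    {R : Type*} [CommRing R] {S : Type*} [Ring S] [Algebra R S]
    (ε : R) (hε : ε ^ 2 = 1)
    (Q0 Q1 Q2 Q3 : S)
    (h01 : Q0 * Q1 = Q1 * Q0)
    (h02 : Q0 * Q2 = Q2 * Q0)
    (h03 : Q0 * Q3 = Q3 * Q0)
    (h12 : Q1 * Q2 + Q2 * Q1 = Q3)
    (h23 : Q2 * Q3 + Q3 * Q2 = ε • Q1)
    (h31 : Q3 * Q1 + Q1 * Q3 = Q2) :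
    (Q0 ^ 2 + ε • Q1 ^ 2 + Q2 ^ 2 + Q3 ^ 2) * Q0
        = Q0 * (Q0 ^ 2 + ε • Q1 ^ 2 + Q2 ^ 2 + Q3 ^ 2) ∧
    (Q0 ^ 2 + ε • Q1 ^ 2 + Q2 ^ 2 + Q3 ^ 2) * Q1
        = Q1 * (Q0 ^ 2 + ε • Q1 ^ 2 + Q2 ^ 2 + Q3 ^ 2) ∧
    (Q0 ^ 2 + ε • Q1 ^ 2 + Q2 ^ 2 + Q3 ^ 2) * Q2
        = Q2 * (Q0 ^ 2 + ε • Q1 ^ 2 + Q2 ^ 2 + Q3 ^ 2) ∧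
    (Q0 ^ 2 + ε • Q1 ^ 2 + Q2 ^ 2 + Q3 ^ 2) * Q3
        = Q3 * (Q0 ^ 2 + ε • Q1 ^ 2 + Q2 ^ 2 + Q3 ^ 2) := by
  simp only [Algebra.smul_def] at h23 ⊢
  set e := algebraMap R S ε with he
  -- `e` commutes with everything
  have ec' : ∀ x y : S, x * (e * y) = e * (x * y) := by
    intro x y
    rw [← mul_assoc, ← Algebra.commutes ε x, mul_assoc]
  -- rearranged relations
  have hA : Q2 * Q1 = Q3 - Q1 * Q2 := by rw [← h12]; noncomm_ring
  have hB : Q3 * Q1 = Q2 - Q1 * Q3 := by rw [← h31]; noncomm_ring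
  have hC : Q1 * Q2 = Q3 - Q2 * Q1 := by rw [← h12]; noncomm_ring
  have hD : Q3 * Q2 = e * Q1 - Q2 * Q3 := by rw [← h23]; noncomm_ring
  have hE : Q2 * Q3 = e * Q1 - Q3 * Q2 := by rw [← h23]; noncomm_ring
  have hF : Q1 * Q3 = Q2 - Q3 * Q1 := by rw [← h31]; noncomm_ring
  -- Q0 commutes with squares
  have q01 : Q1 ^ 2 * Q0 = Q0 * Q1 ^ 2 := by
    rw [pow_two, mul_assoc, ← h01, ← mul_assoc, ← h01, mul_assoc]
  have q02 : Q2 ^ 2 * Q0 = Q0 * Q2 ^ 2 := by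
    rw [pow_two, mul_assoc, ← h02, ← mul_assoc, ← h02, mul_assoc]
  have q03 : Q3 ^ 2 * Q0 = Q0 * Q3 ^ 2 := by
    rw [pow_two, mul_assoc, ← h03, ← mul_assoc, ← h03, mul_assoc]
  -- Q0^2 commutes with each Q_k
  have q10 : Q0 ^ 2 * Q1 = Q1 * Q0 ^ 2 := by
    rw [pow_two, mul_assoc, h01, ← mul_assoc, h01, mul_assoc]
  have q20 : Q0 ^ 2 * Q2 = Q2 * Q0 ^ 2 := by
    rw [pow_two, mul_assoc, h02, ← mul_assoc, h02, mul_assoc]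
  have q30 : Q0 ^ 2 * Q3 = Q3 * Q0 ^ 2 := by
    rw [pow_two, mul_assoc, h03, ← mul_assoc, h03, mul_assoc]
  -- key conjugation identities
  have k2 : Q2 ^ 2 * Q1 = Q2 * Q3 - Q3 * Q2 + Q1 * Q2 ^ 2 := by
    calc Q2 ^ 2 * Q1 = Q2 * (Q2 * Q1) := by noncomm_ring
    _ = Q2 * (Q3 - Q1 * Q2) := by rw [hA]
    _ = Q2 * Q3 - (Q2 * Q1) * Q2 := by noncomm_ring
    _ = Q2 * Q3 - (Q3 - Q1 * Q2) * Q2 := by rw [hA]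
    _ = Q2 * Q3 - Q3 * Q2 + Q1 * Q2 ^ 2 := by noncomm_ring
  have k3 : Q3 ^ 2 * Q1 = Q3 * Q2 - Q2 * Q3 + Q1 * Q3 ^ 2 := by
    calc Q3 ^ 2 * Q1 = Q3 * (Q3 * Q1) := by noncomm_ring
    _ = Q3 * (Q2 - Q1 * Q3) := by rw [hB]
    _ = Q3 * Q2 - (Q3 * Q1) * Q3 := by noncomm_ring
    _ = Q3 * Q2 - (Q2 - Q1 * Q3) * Q3 := by rw [hB]
    _ = Q3 * Q2 - Q2 * Q3 + Q1 * Q3 ^ 2 := by noncomm_ring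
  have k1 : Q1 ^ 2 * Q2 = Q1 * Q3 - Q3 * Q1 + Q2 * Q1 ^ 2 := by
    calc Q1 ^ 2 * Q2 = Q1 * (Q1 * Q2) := by noncomm_ring
    _ = Q1 * (Q3 - Q2 * Q1) := by rw [hC]
    _ = Q1 * Q3 - (Q1 * Q2) * Q1 := by noncomm_ring
    _ = Q1 * Q3 - (Q3 - Q2 * Q1) * Q1 := by rw [hC]
    _ = Q1 * Q3 - Q3 * Q1 + Q2 * Q1 ^ 2 := by noncomm_ring
  have k3' : Q3 ^ 2 * Q2 = e * (Q3 * Q1 - Q1 * Q3) + Q2 * Q3 ^ 2 := by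
    calc Q3 ^ 2 * Q2 = Q3 * (Q3 * Q2) := by noncomm_ring
    _ = Q3 * (e * Q1 - Q2 * Q3) := by rw [hD]
    _ = Q3 * (e * Q1) - (Q3 * Q2) * Q3 := by noncomm_ring
    _ = e * (Q3 * Q1) - (e * Q1 - Q2 * Q3) * Q3 := by rw [ec', hD]
    _ = e * (Q3 * Q1 - Q1 * Q3) + Q2 * Q3 ^ 2 := by noncomm_ring
  have k1' : Q1 ^ 2 * Q3 = Q1 * Q2 - Q2 * Q1 + Q3 * Q1 ^ 2 := by
    calc Q1 ^ 2 * Q3 = Q1 * (Q1 * Q3) := by noncomm_ring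
    _ = Q1 * (Q2 - Q3 * Q1) := by rw [hF]
    _ = Q1 * Q2 - (Q1 * Q3) * Q1 := by noncomm_ring
    _ = Q1 * Q2 - (Q2 - Q3 * Q1) * Q1 := by rw [hF]
    _ = Q1 * Q2 - Q2 * Q1 + Q3 * Q1 ^ 2 := by noncomm_ring
  have k2' : Q2 ^ 2 * Q3 = e * (Q2 * Q1 - Q1 * Q2) + Q3 * Q2 ^ 2 := by
    calc Q2 ^ 2 * Q3 = Q2 * (Q2 * Q3) := by noncomm_ring
    _ = Q2 * (e * Q1 - Q3 * Q2) := by rw [hE]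
    _ = Q2 * (e * Q1) - (Q2 * Q3) * Q2 := by noncomm_ring
    _ = e * (Q2 * Q1) - (e * Q1 - Q3 * Q2) * Q2 := by rw [ec', hE]
    _ = e * (Q2 * Q1 - Q1 * Q2) + Q3 * Q2 ^ 2 := by noncomm_ring
  refine ⟨?_, ?_, ?_, ?_⟩
  · calc (Q0 ^ 2 + e * Q1 ^ 2 + Q2 ^ 2 + Q3 ^ 2) * Q0
        = Q0 ^ 2 * Q0 + e * (Q1 ^ 2 * Q0) + Q2 ^ 2 * Q0 + Q3 ^ 2 * Q0 := by noncomm_ring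
    _ = Q0 ^ 2 * Q0 + e * (Q0 * Q1 ^ 2) + Q0 * Q2 ^ 2 + Q0 * Q3 ^ 2 := by rw [q01, q02, q03]
    _ = Q0 ^ 2 * Q0 + Q0 * (e * Q1 ^ 2) + Q0 * Q2 ^ 2 + Q0 * Q3 ^ 2 := by rw [ec']
    _ = Q0 * (Q0 ^ 2 + e * Q1 ^ 2 + Q2 ^ 2 + Q3 ^ 2) := by noncomm_ring
  · calc (Q0 ^ 2 + e * Q1 ^ 2 + Q2 ^ 2 + Q3 ^ 2) * Q1
        = Q0 ^ 2 * Q1 + e * (Q1 * Q1 ^ 2) + Q2 ^ 2 * Q1 + Q3 ^ 2 * Q1 := by noncomm_ring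
    _ = Q1 * Q0 ^ 2 + e * (Q1 * Q1 ^ 2) + (Q2 * Q3 - Q3 * Q2 + Q1 * Q2 ^ 2)
          + (Q3 * Q2 - Q2 * Q3 + Q1 * Q3 ^ 2) := by rw [q10, k2, k3]
    _ = Q1 * Q0 ^ 2 + Q1 * (e * Q1 ^ 2) + Q1 * Q2 ^ 2 + Q1 * Q3 ^ 2 := by
          rw [ec']; noncomm_ring
    _ = Q1 * (Q0 ^ 2 + e * Q1 ^ 2 + Q2 ^ 2 + Q3 ^ 2) := by noncomm_ring
  · calc (Q0 ^ 2 + e * Q1 ^ 2 + Q2 ^ 2 + Q3 ^ 2) * Q2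
        = Q0 ^ 2 * Q2 + e * (Q1 ^ 2 * Q2) + Q2 * Q2 ^ 2 + Q3 ^ 2 * Q2 := by noncomm_ring
    _ = Q2 * Q0 ^ 2 + e * (Q1 * Q3 - Q3 * Q1 + Q2 * Q1 ^ 2) + Q2 * Q2 ^ 2
          + (e * (Q3 * Q1 - Q1 * Q3) + Q2 * Q3 ^ 2) := by rw [q20, k1, k3']
    _ = Q2 * Q0 ^ 2 + Q2 * (e * Q1 ^ 2) + Q2 * Q2 ^ 2 + Q2 * Q3 ^ 2 := by
          rw [ec']; noncomm_ring
    _ = Q2 * (Q0 ^ 2 + e * Q1 ^ 2 + Q2 ^ 2 + Q3 ^ 2) := by noncomm_ring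
  · calc (Q0 ^ 2 + e * Q1 ^ 2 + Q2 ^ 2 + Q3 ^ 2) * Q3
        = Q0 ^ 2 * Q3 + e * (Q1 ^ 2 * Q3) + Q2 ^ 2 * Q3 + Q3 * Q3 ^ 2 := by noncomm_ring
    _ = Q3 * Q0 ^ 2 + e * (Q1 * Q2 - Q2 * Q1 + Q3 * Q1 ^ 2)
          + (e * (Q2 * Q1 - Q1 * Q2) + Q3 * Q2 ^ 2) + Q3 * Q3 ^ 2 := by rw [q30, k1', k2']
    _ = Q3 * Q0 ^ 2 + Q3 * (e * Q1 ^ 2) + Q3 * Q2 ^ 2 + Q3 * Q3 ^ 2 := by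
          rw [ec']; noncomm_ring
    _ = Q3 * (Q0 ^ 2 + e * Q1 ^ 2 + Q2 ^ 2 + Q3 ^ 2) := by noncomm_ring
end

section
/- Let R be a commutative ring, ε ∈ R with ε² = 1, S an associative R-algebra, and Q₀, Q₁, Q₂, Q₃ ∈ S satisfying the A1_ε relations. With b₁ = ε, b₂ = b₃ = 1 and structure constants f(1,2,3) = f(2,1,3) = 1, f(2,3,1) = f(3,2,1) = ε, f(3,1,2) = f(1,3,2) = 1, and f(i,j,k) = 0 for all other (i,j,k) ∈ {1,2,3}³, one has for every i ∈ {1,2,3}: Σ_{j,k∈{1,2,3}} b_j · f(i,j,k) · Q_k · Q_j = ε · Q_i. -/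
/-- The diagonal entries `b₁ = ε, b₂ = b₃ = 1` of the inverse bilinear form of
`A1_ε`, restricted to the odd indices `{1,2,3}` (modelled by `Fin 3`, where
`0 ↔ 1`, `1 ↔ 2`, `2 ↔ 3`). -/
def bOdd {R : Type*} [CommRing R] (ε : R) : Fin 3 → R := ![ε, 1, 1]

/-- The structure constants of `A1_ε` on the odd indices `{1,2,3}` (modelled by
`Fin 3`): `f(1,2,3) = f(2,1,3) = 1`, `f(2,3,1) = f(3,2,1) = ε`,
`f(3,1,2) = f(1,3,2) = 1`, and `0` otherwise. -/
def fOdd {R : Type*} [CommRing R] (ε : R) (i j k : Fin 3) : R :=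
  if i ≠ j ∧ j ≠ k ∧ i ≠ k then (if k = 0 then ε else 1) else 0

/-! Expanding the contraction, only the two orderings of the two indices different from `i`
survive, and they carry the same coefficient (invariance of the form:
`b_j f(i,j,k) = b_k f(i,k,j)`); the sum is therefore that coefficient times an
anticommutator, which the `A1_ε` relations evaluate. -/

section Contraction

variable {R : Type*} [CommRing R] {S : Type*} [NonUnitalNonAssocSemiring S] [Module R S]
  (ε : R) (Q : Fin 3 → S)

theorem sum_bOdd_mul_fOdd_zero_smul :
    ∑ j : Fin 3, ∑ k : Fin 3, (bOdd ε j * fOdd ε 0 j k) • (Q k * Q j)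
      = Q 1 * Q 2 + Q 2 * Q 1 := by
  simp [bOdd, fOdd, Fin.sum_univ_three, add_comm]

theorem sum_bOdd_mul_fOdd_one_smul :
    ∑ j : Fin 3, ∑ k : Fin 3, (bOdd ε j * fOdd ε 1 j k) • (Q k * Q j)
      = ε • (Q 2 * Q 0 + Q 0 * Q 2) := by
  simp [bOdd, fOdd, Fin.sum_univ_three, smul_add]

theorem sum_bOdd_mul_fOdd_two_smul :
    ∑ j : Fin 3, ∑ k : Fin 3, (bOdd ε j * fOdd ε 2 j k) • (Q k * Q j)
      = ε • (Q 0 * Q 1 + Q 1 * Q 0) := by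
  simp [bOdd, fOdd, Fin.sum_univ_three, smul_add, add_comm]

end Contraction

theorem A1eps_one_vertex_general
    {R : Type*} [CommRing R] {S : Type*} [Ring S] [Algebra R S]
    (ε : R)
    (Q : Fin 3 → S)
    (h12 : Q 0 * Q 1 + Q 1 * Q 0 = Q 2)
    (h23 : Q 1 * Q 2 + Q 2 * Q 1 = ε • Q 0)
    (h31 : Q 2 * Q 0 + Q 0 * Q 2 = Q 1) :
    ∀ i : Fin 3,
      (∑ j : Fin 3, ∑ k : Fin 3, (bOdd ε j * fOdd ε i j k) • (Q k * Q j))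
        = ε • Q i := by
  intro i
  fin_cases i
  · exact (sum_bOdd_mul_fOdd_zero_smul ε Q).trans h23
  · exact (sum_bOdd_mul_fOdd_one_smul ε Q).trans (congrArg (ε • ·) h31)
  · exact (sum_bOdd_mul_fOdd_two_smul ε Q).trans (congrArg (ε • ·) h12)

/-- **Value of the one-trivalent-vertex Jacobi diagram (Proposition 4.1 core).**
For `Q₀, Q₁, Q₂, Q₃` satisfying the `A1_ε` relations (here `Q i` for `i : Fin 3`
denotes `Q_{i+1}`), for every `i`: `Σ_{j,k} b_j·f(i,j,k)·Q_k·Q_j = ε·Q_i`. -/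
theorem A1eps_one_vertex
    {R : Type*} [CommRing R] {S : Type*} [Ring S] [Algebra R S]
    (ε : R) (hε : ε ^ 2 = 1)
    (Q0 : S) (Q : Fin 3 → S)
    (h01 : Q0 * Q 0 = Q 0 * Q0)
    (h02 : Q0 * Q 1 = Q 1 * Q0)
    (h03 : Q0 * Q 2 = Q 2 * Q0)
    (h12 : Q 0 * Q 1 + Q 1 * Q 0 = Q 2)
    (h23 : Q 1 * Q 2 + Q 2 * Q 1 = ε • Q 0)
    (h31 : Q 2 * Q 0 + Q 0 * Q 2 = Q 1) :
    ∀ i : Fin 3,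
      (∑ j : Fin 3, ∑ k : Fin 3, (bOdd ε j * fOdd ε i j k) • (Q k * Q j))
        = ε • Q i :=
  A1eps_one_vertex_general ε Q h12 h23 h31
end

section
/- Let R be a commutative ring, ε ∈ R with ε² = 1, and S an associative R-algebra. Let Q₁, Q₂, Q₃, A, T, U, V, W ∈ S be arbitrary elements. With b₁ = ε, b₂ = b₃ = 1, structure constants f(1,2,3) = f(2,1,3) = 1, f(2,3,1) = f(3,2,1) = ε, f(3,1,2) = f(1,3,2) = 1 (zero otherwise), and phase P(i,j) = −1 for i ≠ j, P(i,i) = 1 (i,j ∈ {1,2,3}), one has: Σ_{μ,λ,σ,ν,ρ∈{1,2,3}} b_μ b_λ b_σ · f(μ,λ,ν) · f(λ,σ,ρ) · A Q_μ T Q_ν U Q_ρ V Q_σ W = ε · Σ_{i,j∈{1,2,3}} b_i b_j · ( A Q_i T Q_j U Q_j V Q_i W − P(i,j) · A Q_i T Q_j U Q_i V Q_j W ). -/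
/-- The crossing phase `P(i,j) = −1` for `i ≠ j`, `P(i,i) = 1`. -/
def phOdd {R : Type*} [CommRing R] (i j : Fin 3) : R := if i = j then 1 else -1

set_option maxHeartbeats 1000000 in
/-- **Expansion of the weight `D_L` of the 'geta' Jacobi diagram.**  A formal
identity holding for arbitrary `Q₁, Q₂, Q₃, A, T, U, V, W` in an associative
`R`-algebra, with no relations imposed. -/
theorem A1eps_geta_expansion
    {R : Type*} [CommRing R] {S : Type*} [Ring S] [Algebra R S]
    (ε : R) (hε : ε ^ 2 = 1)
    (Q : Fin 3 → S) (A T U V W : S) :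
    (∑ μ : Fin 3, ∑ lam : Fin 3, ∑ σ : Fin 3, ∑ ν : Fin 3, ∑ ρ : Fin 3,
        (bOdd ε μ * bOdd ε lam * bOdd ε σ * fOdd ε μ lam ν * fOdd ε lam σ ρ) •
          (A * Q μ * T * Q ν * U * Q ρ * V * Q σ * W))
      = ε • (∑ i : Fin 3, ∑ j : Fin 3,
          (bOdd ε i * bOdd ε j) •
            (A * Q i * T * Q j * U * Q j * V * Q i * W
              - (phOdd (R := R) i j) • (A * Q i * T * Q j * U * Q i * V * Q j * W))) := by
  have h2 : ε ^ 2 = 1 := hε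
  have h3 : ε ^ 3 = ε := by linear_combination ε * hε
  have h4 : ε ^ 4 = 1 := by linear_combination (ε ^ 2 + 1) * hε
  have h5 : ε ^ 5 = ε := by linear_combination (ε ^ 3 + ε) * hε
  simp only [Fin.sum_univ_three, bOdd, fOdd, phOdd, Matrix.cons_val_zero, Matrix.cons_val_one,
    Matrix.head_cons, Matrix.cons_val_two, Matrix.tail_cons]
  simp (config := { decide := true }) only [smul_sub, smul_smul, sub_eq_add_neg, ne_eq,
    ite_true, ite_false, if_true, if_false, not_false_eq_true, and_self, and_true, true_and,
    zero_smul, one_smul, mul_one, one_mul, smul_zero, add_zero, zero_add, neg_neg]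
  match_scalars <;>
    first
      | ring1
      | (ring_nf; simp only [h2, h3, h4, h5]; try ring1)
end

section
/- Let R be a commutative ring, ε ∈ R with ε² = 1, S an associative R-algebra, and Q₀, Q₁, Q₂, Q₃ ∈ S satisfying the A1_ε relations. Let A, T, U, V, W ∈ S each commute with Q₀. Define (indices μ,ν range over {0,1,2,3} and i over {1,2,3} unless stated): D_L := Σ_{μ,λ,σ,ν,ρ∈{1,2,3}} b_μ b_λ b_σ f(μ,λ,ν) f(λ,σ,ρ) · A Q_μ T Q_ν U Q_ρ V Q_σ W; D_{R1} := Σ_{μ,ν} b_μ b_ν · A Q_μ T Q_ν U Q_ν V Q_μ W; D_{R2} := Σ_{μ,ν} P(μ,ν) b_μ b_ν · A Q_μ T Q_ν U Q_μ V Q_ν W; D_{R3} := Σ_μ b_μ · A T Q_μ U V Q_μ W; D_{R4} := Σ_μ b_μ · A Q_μ T U Q_μ V W; D_{R5} := Σ_μ b_μ · A Q_μ T U V Q_μ W; D_{R6} := Σ_μ b_μ · A T Q_μ U Q_μ V W. Then D_{R1} − D_{R2} = ε·D_L + Q₀²·(D_{R5} + D_{R6} − D_{R3} − D_{R4}). 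-/
/-- Diagonal entries `b₀ = 1, b₁ = ε, b₂ = b₃ = 1` of the inverse bilinear form
`C = diag(1,ε,1,1)` of `A1_ε`. -/
def bC {R : Type*} [CommRing R] (ε : R) : Fin 4 → R := ![1, ε, 1, 1]

/-- Structure constants of `A1_ε`: `f(1,2,3) = f(2,1,3) = 1`,
`f(2,3,1) = f(3,2,1) = ε`, `f(3,1,2) = f(1,3,2) = 1`, zero otherwise. -/
def fC {R : Type*} [CommRing R] (ε : R) (i j k : Fin 4) : R :=
  if i ≠ 0 ∧ j ≠ 0 ∧ k ≠ 0 ∧ i ≠ j ∧ j ≠ k ∧ i ≠ k then (if k = 1 then ε else 1)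
  else 0

/-- Grading phase: `P(μ,ν) = −1` if `μ ≠ ν` and both `μ, ν ∈ {1,2,3}`,
otherwise `P(μ,ν) = 1`. -/
def phC {R : Type*} [CommRing R] (μ ν : Fin 4) : R :=
  if μ ≠ ν ∧ μ ≠ 0 ∧ ν ≠ 0 then -1 else 1

section Aux

variable {R : Type*} [CommRing R] (ε : R)

lemma bC_e0 : bC ε 0 = 1 := rfl
lemma bC_e1 : bC ε 1 = ε := rfl
lemma bC_e2 : bC ε 2 = 1 := rfl
lemma bC_e3 : bC ε 3 = 1 := rfl
lemma fC_e111 : fC ε 1 1 1 = 0 := rfl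
lemma fC_e112 : fC ε 1 1 2 = 0 := rfl
lemma fC_e113 : fC ε 1 1 3 = 0 := rfl
lemma fC_e121 : fC ε 1 2 1 = 0 := rfl
lemma fC_e122 : fC ε 1 2 2 = 0 := rfl
lemma fC_e123 : fC ε 1 2 3 = 1 := rfl
lemma fC_e131 : fC ε 1 3 1 = 0 := rfl
lemma fC_e132 : fC ε 1 3 2 = 1 := rfl
lemma fC_e133 : fC ε 1 3 3 = 0 := rfl
lemma fC_e211 : fC ε 2 1 1 = 0 := rfl
lemma fC_e212 : fC ε 2 1 2 = 0 := rfl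
lemma fC_e213 : fC ε 2 1 3 = 1 := rfl
lemma fC_e221 : fC ε 2 2 1 = 0 := rfl
lemma fC_e222 : fC ε 2 2 2 = 0 := rfl
lemma fC_e223 : fC ε 2 2 3 = 0 := rfl
lemma fC_e231 : fC ε 2 3 1 = ε := rfl
lemma fC_e232 : fC ε 2 3 2 = 0 := rfl
lemma fC_e233 : fC ε 2 3 3 = 0 := rfl
lemma fC_e311 : fC ε 3 1 1 = 0 := rfl
lemma fC_e312 : fC ε 3 1 2 = 1 := rfl
lemma fC_e313 : fC ε 3 1 3 = 0 := rfl
lemma fC_e321 : fC ε 3 2 1 = ε := rfl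
lemma fC_e322 : fC ε 3 2 2 = 0 := rfl
lemma fC_e323 : fC ε 3 2 3 = 0 := rfl
lemma fC_e331 : fC ε 3 3 1 = 0 := rfl
lemma fC_e332 : fC ε 3 3 2 = 0 := rfl
lemma fC_e333 : fC ε 3 3 3 = 0 := rfl
lemma phC_e00 : phC (R := R) 0 0 = 1 := rfl
lemma phC_e01 : phC (R := R) 0 1 = 1 := rfl
lemma phC_e02 : phC (R := R) 0 2 = 1 := rfl
lemma phC_e03 : phC (R := R) 0 3 = 1 := rfl
lemma phC_e10 : phC (R := R) 1 0 = 1 := rfl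
lemma phC_e11 : phC (R := R) 1 1 = 1 := rfl
lemma phC_e12 : phC (R := R) 1 2 = -1 := rfl
lemma phC_e13 : phC (R := R) 1 3 = -1 := rfl
lemma phC_e20 : phC (R := R) 2 0 = 1 := rfl
lemma phC_e21 : phC (R := R) 2 1 = -1 := rfl
lemma phC_e22 : phC (R := R) 2 2 = 1 := rfl
lemma phC_e23 : phC (R := R) 2 3 = -1 := rfl
lemma phC_e30 : phC (R := R) 3 0 = 1 := rfl
lemma phC_e31 : phC (R := R) 3 1 = -1 := rfl
lemma phC_e32 : phC (R := R) 3 2 = -1 := rfl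
lemma phC_e33 : phC (R := R) 3 3 = 1 := rfl

lemma sum123' {M : Type*} [AddCommMonoid M] (g : Fin 4 → M) :
    ∑ x ∈ ({1,2,3} : Finset (Fin 4)), g x = g 1 + g 2 + g 3 := by
  rw [show ({1,2,3} : Finset (Fin 4)) = insert 1 (insert 2 {3}) from rfl,
    Finset.sum_insert (by decide), Finset.sum_insert (by decide), Finset.sum_singleton, add_assoc]

lemma sz' {S : Type*} [Ring S] (z a b c : S) (ha : z * a = a * z) (hb : z * b = b * z) :
    a * z * b * z * c = z ^ 2 * (a * b * c) := by
  have h : z ^ 2 * (a * b) = (a * b) * z ^ 2 :=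
    (((show Commute z a from ha).mul_right (show Commute z b from hb)).pow_left 2).eq
  calc a * z * b * z * c = a * (z * b) * z * c := by rw [mul_assoc a z b]
    _ = a * (b * z) * z * c := by rw [hb]
    _ = (a * b) * z ^ 2 * c := by noncomm_ring
    _ = z ^ 2 * (a * b) * c := by rw [← h]
    _ = z ^ 2 * (a * b * c) := by rw [mul_assoc]

end Aux

/-- **The identity (5.14) proving Proposition 4.2:**
`D_{R1} − D_{R2} = ε·D_L + Q₀²·(D_{R5} + D_{R6} − D_{R3} − D_{R4})`. -/
theorem A1eps_geta_identity
    {R : Type*} [CommRing R] {S : Type*} [Ring S] [Algebra R S]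
    (ε : R) (hε : ε ^ 2 = 1)
    (Q : Fin 4 → S)
    (h01 : Q 0 * Q 1 = Q 1 * Q 0)
    (h02 : Q 0 * Q 2 = Q 2 * Q 0)
    (h03 : Q 0 * Q 3 = Q 3 * Q 0)
    (h12 : Q 1 * Q 2 + Q 2 * Q 1 = Q 3)
    (h23 : Q 2 * Q 3 + Q 3 * Q 2 = ε • Q 1)
    (h31 : Q 3 * Q 1 + Q 1 * Q 3 = Q 2)
    (A T U V W : S)
    (hA : A * Q 0 = Q 0 * A) (hT : T * Q 0 = Q 0 * T)
    (hU : U * Q 0 = Q 0 * U) (hV : V * Q 0 = Q 0 * V)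
    (hW : W * Q 0 = Q 0 * W) :
    -- D_{R1} − D_{R2}
    (∑ μ : Fin 4, ∑ ν : Fin 4,
        (bC ε μ * bC ε ν) • (A * Q μ * T * Q ν * U * Q ν * V * Q μ * W))
      - (∑ μ : Fin 4, ∑ ν : Fin 4,
          (phC (R := R) μ ν * (bC ε μ * bC ε ν)) •
            (A * Q μ * T * Q ν * U * Q μ * V * Q ν * W))
    = -- ε · D_L
      ε • (∑ μ ∈ ({1, 2, 3} : Finset (Fin 4)),
            ∑ lam ∈ ({1, 2, 3} : Finset (Fin 4)),
              ∑ σ ∈ ({1, 2, 3} : Finset (Fin 4)),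
                ∑ ν ∈ ({1, 2, 3} : Finset (Fin 4)),
                  ∑ ρ ∈ ({1, 2, 3} : Finset (Fin 4)),
                    (bC ε μ * bC ε lam * bC ε σ * fC ε μ lam ν * fC ε lam σ ρ) •
                      (A * Q μ * T * Q ν * U * Q ρ * V * Q σ * W))
      -- + Q₀² · (D_{R5} + D_{R6} − D_{R3} − D_{R4})
      + Q 0 ^ 2 *
          ((∑ μ : Fin 4, bC ε μ • (A * Q μ * T * U * V * Q μ * W))
            + (∑ μ : Fin 4, bC ε μ • (A * T * Q μ * U * Q μ * V * W))
            - (∑ μ : Fin 4, bC ε μ • (A * T * Q μ * U * V * Q μ * W))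
            - (∑ μ : Fin 4, bC ε μ • (A * Q μ * T * U * Q μ * V * W))) := by
  have cA : Commute (Q 0) A := hA.symm
  have cT : Commute (Q 0) T := hT.symm
  have cU : Commute (Q 0) U := hU.symm
  have cV : Commute (Q 0) V := hV.symm
  have cW : Commute (Q 0) W := hW.symm
  have cQ : ∀ ν : Fin 4, Commute (Q 0) (Q ν) := by
    intro ν
    fin_cases ν
    · exact Commute.refl _
    · exact h01
    · exact h02
    · exact h03
  have e1 : ∀ ν : Fin 4, A * Q 0 * T * Q ν * U * Q ν * V * Q 0 * W
      = Q 0 ^ 2 * (A * T * Q ν * U * Q ν * V * W) := by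
    intro ν
    calc A * Q 0 * T * Q ν * U * Q ν * V * Q 0 * W
        = A * Q 0 * (T * Q ν * U * Q ν * V) * Q 0 * W := by noncomm_ring
      _ = Q 0 ^ 2 * (A * (T * Q ν * U * Q ν * V) * W) :=
          sz' _ _ _ _ cA.eq ((((cT.mul_right (cQ ν)).mul_right cU).mul_right (cQ ν)).mul_right cV).eq
      _ = Q 0 ^ 2 * (A * T * Q ν * U * Q ν * V * W) := by noncomm_ring
  have e2 : ∀ ν : Fin 4, A * Q 0 * T * Q ν * U * Q 0 * V * Q ν * W
      = Q 0 ^ 2 * (A * T * Q ν * U * V * Q ν * W) := by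
    intro ν
    calc A * Q 0 * T * Q ν * U * Q 0 * V * Q ν * W
        = A * Q 0 * (T * Q ν * U) * Q 0 * (V * Q ν * W) := by noncomm_ring
      _ = Q 0 ^ 2 * (A * (T * Q ν * U) * (V * Q ν * W)) :=
          sz' _ _ _ _ cA.eq ((cT.mul_right (cQ ν)).mul_right cU).eq
      _ = Q 0 ^ 2 * (A * T * Q ν * U * V * Q ν * W) := by noncomm_ring
  have e3 : ∀ μ : Fin 4, A * Q μ * T * Q 0 * U * Q 0 * V * Q μ * W
      = Q 0 ^ 2 * (A * Q μ * T * U * V * Q μ * W) := by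
    intro μ
    calc A * Q μ * T * Q 0 * U * Q 0 * V * Q μ * W
        = (A * Q μ * T) * Q 0 * U * Q 0 * (V * Q μ * W) := by noncomm_ring
      _ = Q 0 ^ 2 * ((A * Q μ * T) * U * (V * Q μ * W)) :=
          sz' _ _ _ _ ((cA.mul_right (cQ μ)).mul_right cT).eq cU.eq
      _ = Q 0 ^ 2 * (A * Q μ * T * U * V * Q μ * W) := by noncomm_ring
  have e4 : ∀ μ : Fin 4, A * Q μ * T * Q 0 * U * Q μ * V * Q 0 * W
      = Q 0 ^ 2 * (A * Q μ * T * U * Q μ * V * W) := by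
    intro μ
    calc A * Q μ * T * Q 0 * U * Q μ * V * Q 0 * W
        = (A * Q μ * T) * Q 0 * (U * Q μ * V) * Q 0 * W := by noncomm_ring
      _ = Q 0 ^ 2 * ((A * Q μ * T) * (U * Q μ * V) * W) :=
          sz' _ _ _ _ ((cA.mul_right (cQ μ)).mul_right cT).eq ((cU.mul_right (cQ μ)).mul_right cV).eq
      _ = Q 0 ^ 2 * (A * Q μ * T * U * Q μ * V * W) := by noncomm_ring
  have n1 : A * T * Q 0 * U * Q 0 * V * W = Q 0 ^ 2 * (A * T * U * V * W) := by
    calc A * T * Q 0 * U * Q 0 * V * W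
        = (A * T) * Q 0 * U * Q 0 * (V * W) := by noncomm_ring
      _ = Q 0 ^ 2 * ((A * T) * U * (V * W)) := sz' _ _ _ _ (cA.mul_right cT).eq cU.eq
      _ = Q 0 ^ 2 * (A * T * U * V * W) := by noncomm_ring
  have n2 : A * T * Q 0 * U * V * Q 0 * W = Q 0 ^ 2 * (A * T * U * V * W) := by
    calc A * T * Q 0 * U * V * Q 0 * W
        = (A * T) * Q 0 * (U * V) * Q 0 * W := by noncomm_ring
      _ = Q 0 ^ 2 * ((A * T) * (U * V) * W) :=
          sz' _ _ _ _ (cA.mul_right cT).eq (cU.mul_right cV).eq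
      _ = Q 0 ^ 2 * (A * T * U * V * W) := by noncomm_ring
  have n3 : A * Q 0 * T * U * V * Q 0 * W = Q 0 ^ 2 * (A * T * U * V * W) := by
    calc A * Q 0 * T * U * V * Q 0 * W
        = A * Q 0 * (T * U * V) * Q 0 * W := by noncomm_ring
      _ = Q 0 ^ 2 * (A * (T * U * V) * W) :=
          sz' _ _ _ _ cA.eq ((cT.mul_right cU).mul_right cV).eq
      _ = Q 0 ^ 2 * (A * T * U * V * W) := by noncomm_ring
  have n4 : A * Q 0 * T * U * Q 0 * V * W = Q 0 ^ 2 * (A * T * U * V * W) := by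
    calc A * Q 0 * T * U * Q 0 * V * W
        = A * Q 0 * (T * U) * Q 0 * (V * W) := by noncomm_ring
      _ = Q 0 ^ 2 * (A * (T * U) * (V * W)) := sz' _ _ _ _ cA.eq (cT.mul_right cU).eq
      _ = Q 0 ^ 2 * (A * T * U * V * W) := by noncomm_ring
  simp only [sum123', Fin.sum_univ_four]
  simp only [bC_e0, bC_e1, bC_e2, bC_e3, fC_e111, fC_e112, fC_e113, fC_e121, fC_e122, fC_e123, fC_e131, fC_e132, fC_e133, fC_e211, fC_e212, fC_e213, fC_e221, fC_e222, fC_e223, fC_e231, fC_e232, fC_e233, fC_e311, fC_e312, fC_e313, fC_e321, fC_e322, fC_e323, fC_e331, fC_e332, fC_e333, phC_e00, phC_e01, phC_e02, phC_e03, phC_e10, phC_e11, phC_e12, phC_e13, phC_e20, phC_e21, phC_e22, phC_e23, phC_e30, phC_e31, phC_e32, phC_e33]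
  simp only [e1, e2, e3, e4, n1, n2, n3, n4]
  simp only [zero_smul, add_zero, zero_add, mul_zero, zero_mul, mul_one, one_mul,
    smul_add, smul_sub, mul_add, mul_sub, mul_smul_comm, smul_smul]
  match_scalars <;>
    first
      | ring1
      | linear_combination hε
      | linear_combination ε * hε
      | linear_combination (-1 : R) * hε
      | linear_combination (-ε) * hε
      | linear_combination 2 * hε
      | linear_combination (-2 : R) * hε
end

section
/- Let ε ∈ {1, −1} ⊆ ℂ and let s ∈ ℂ satisfy s² = 2ε. Define 4×4 complex matrices, with rows and columns indexed by 0,1,2,3 and E_{ij} denoting the matrix unit with a 1 in row i and column j: ρH := s·E₀₀, ρQ₁ := E₂₃ + E₃₂, ρQ₂ := E₃₁ + ε·E₁₃, ρQ₃ := E₂₁ + ε·E₁₂. Then these matrices satisfy the A1_ε relations: ρH·ρQ_k = ρQ_k·ρH for k = 1,2,3, ρQ₁·ρQ₂ + ρQ₂·ρQ₁ = ρQ₃, ρQ₂·ρQ₃ + ρQ₃·ρQ₂ = ε·ρQ₁, and ρQ₃·ρQ₁ + ρQ₁·ρQ₃ = ρQ₂. -/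
open Matrix

/-! The `ρ(Q_k)` are built from matrix units `E_ij` with `i, j ∈ {1, 2, 3}`, while `ρ(H)` lives on
the complementary index `0`, so all products of `ρ(H)` with a `ρ(Q_k)` vanish. By
`E_ij E_kl = δ_jk E_il`, each anticommutator `{ρ(Q_k), ρ(Q_l)}` has exactly two nonvanishing
products of matrix units, which add up to the required right-hand side. -/

theorem Matrix.commute_single_of_row_eq_zero_of_col_eq_zero {n α : Type*} [Fintype n]
    [DecidableEq n] [NonUnitalNonAssocSemiring α] {i j : n} {M : Matrix n n α} (c : α)
    (hrow : ∀ k, M j k = 0) (hcol : ∀ k, M k i = 0) : Commute (single i j c) M := by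
  have hleft : single i j c * M = 0 := by
    ext a b
    rcases eq_or_ne a i with rfl | ha
    · simp [hrow]
    · simp [ha]
  have hright : M * single i j c = 0 := by
    ext a b
    rcases eq_or_ne b j with rfl | hb
    · simp [hcol]
    · simp [hb]
  exact hleft.trans hright.symm

namespace A1eps

variable {R : Type*} [Semiring R]

variable (R) in
def rhoQ₁ : Matrix (Fin 4) (Fin 4) R := single 2 3 1 + single 3 2 1

def rhoQ₂ (ε : R) : Matrix (Fin 4) (Fin 4) R := single 3 1 1 + ε • single 1 3 1

def rhoQ₃ (ε : R) : Matrix (Fin 4) (Fin 4) R := single 2 1 1 + ε • single 1 2 1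

variable (ε : R)

theorem rhoQ₁_mul_rhoQ₂_add_rhoQ₂_mul_rhoQ₁ :
    rhoQ₁ R * rhoQ₂ ε + rhoQ₂ ε * rhoQ₁ R = rhoQ₃ ε := by
  simp [rhoQ₁, rhoQ₂, rhoQ₃, mul_add, add_mul, smul_single, add_comm]

theorem rhoQ₂_mul_rhoQ₃_add_rhoQ₃_mul_rhoQ₂ :
    rhoQ₂ ε * rhoQ₃ ε + rhoQ₃ ε * rhoQ₂ ε = ε • rhoQ₁ R := by
  simp [rhoQ₁, rhoQ₂, rhoQ₃, mul_add, add_mul, smul_single, add_comm]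

theorem rhoQ₃_mul_rhoQ₁_add_rhoQ₁_mul_rhoQ₃ :
    rhoQ₃ ε * rhoQ₁ R + rhoQ₁ R * rhoQ₃ ε = rhoQ₂ ε := by
  simp [rhoQ₁, rhoQ₂, rhoQ₃, mul_add, add_mul, smul_single, add_comm]

theorem commute_single_zero_zero_rhoQ₁ (c : R) : Commute (single 0 0 c) (rhoQ₁ R) :=
  commute_single_of_row_eq_zero_of_col_eq_zero c (by simp [rhoQ₁]) (by simp [rhoQ₁])

theorem commute_single_zero_zero_rhoQ₂ (c : R) : Commute (single 0 0 c) (rhoQ₂ ε) :=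
  commute_single_of_row_eq_zero_of_col_eq_zero c (by simp [rhoQ₂]) (by simp [rhoQ₂])

theorem commute_single_zero_zero_rhoQ₃ (c : R) : Commute (single 0 0 c) (rhoQ₃ ε) :=
  commute_single_of_row_eq_zero_of_col_eq_zero c (by simp [rhoQ₃]) (by simp [rhoQ₃])

end A1eps

open A1eps in
theorem A1eps_four_dim_rep_general
    (ε : ℂ)
    (s : ℂ) :
    let ρH : Matrix (Fin 4) (Fin 4) ℂ := s • single 0 0 1
    let ρQ1 : Matrix (Fin 4) (Fin 4) ℂ := single 2 3 1 + single 3 2 1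
    let ρQ2 : Matrix (Fin 4) (Fin 4) ℂ := single 3 1 1 + ε • single 1 3 1
    let ρQ3 : Matrix (Fin 4) (Fin 4) ℂ := single 2 1 1 + ε • single 1 2 1
    ρH * ρQ1 = ρQ1 * ρH ∧
    ρH * ρQ2 = ρQ2 * ρH ∧
    ρH * ρQ3 = ρQ3 * ρH ∧
    ρQ1 * ρQ2 + ρQ2 * ρQ1 = ρQ3 ∧
    ρQ2 * ρQ3 + ρQ3 * ρQ2 = ε • ρQ1 ∧
    ρQ3 * ρQ1 + ρQ1 * ρQ3 = ρQ2 := by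
  intro ρH ρQ1 ρQ2 ρQ3
  have hH : ρH = single 0 0 s := by simp [ρH, smul_single]
  rw [hH]
  exact ⟨commute_single_zero_zero_rhoQ₁ s, commute_single_zero_zero_rhoQ₂ ε s,
    commute_single_zero_zero_rhoQ₃ ε s, rhoQ₁_mul_rhoQ₂_add_rhoQ₂_mul_rhoQ₁ ε,
    rhoQ₂_mul_rhoQ₃_add_rhoQ₃_mul_rhoQ₂ ε, rhoQ₃_mul_rhoQ₁_add_rhoQ₁_mul_rhoQ₃ ε⟩

/-- **The four-dimensional representation of `A1_ε` satisfies the `A1_ε`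
relations.**  With `ρH = s·E₀₀`, `ρQ₁ = E₂₃ + E₃₂`, `ρQ₂ = E₃₁ + ε·E₁₃`,
`ρQ₃ = E₂₁ + ε·E₁₂` (`s² = 2ε`, `ε = ±1`), one has `[ρH, ρQ_k] = 0`,
`{ρQ₁,ρQ₂} = ρQ₃`, `{ρQ₂,ρQ₃} = ε·ρQ₁`, `{ρQ₃,ρQ₁} = ρQ₂`. -/
theorem A1eps_four_dim_rep
    (ε : ℂ) (hε : ε = 1 ∨ ε = -1)
    (s : ℂ) (hs : s ^ 2 = 2 * ε) :
    let ρH : Matrix (Fin 4) (Fin 4) ℂ := s • single 0 0 1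
    let ρQ1 : Matrix (Fin 4) (Fin 4) ℂ := single 2 3 1 + single 3 2 1
    let ρQ2 : Matrix (Fin 4) (Fin 4) ℂ := single 3 1 1 + ε • single 1 3 1
    let ρQ3 : Matrix (Fin 4) (Fin 4) ℂ := single 2 1 1 + ε • single 1 2 1
    ρH * ρQ1 = ρQ1 * ρH ∧
    ρH * ρQ2 = ρQ2 * ρH ∧
    ρH * ρQ3 = ρQ3 * ρH ∧
    ρQ1 * ρQ2 + ρQ2 * ρQ1 = ρQ3 ∧
    ρQ2 * ρQ3 + ρQ3 * ρQ2 = ε • ρQ1 ∧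
    ρQ3 * ρQ1 + ρQ1 * ρQ3 = ρQ2 :=
  A1eps_four_dim_rep_general ε s
end

section
/- Let R be a commutative ring. For degrees α, β ∈ ℤ/2 × ℤ/2 define the sign σ(α,β) := (−1)^{α₁β₂+α₂β₁} ∈ R (exponent computed mod 2, so σ(α,β) = −1 if α₁β₂+α₂β₁ = 1 and σ(α,β) = 1 otherwise). Let a, b, c, m ∈ ℤ/2 × ℤ/2 with a + b + c = m, and let A, B, C, M be square n×n matrices over R such that M·A = σ(m,a)·(A·M), M·B = σ(m,b)·(B·M), and M·C = σ(m,c)·(C·M). Then trace( (A·B − σ(a,b)·(B·A)) · M · C ) = σ(b,m) · trace( A · M · (B·C − σ(b,c)·(C·B)) ). -/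
open Matrix

/-- The sign `σ(α,β) = (−1)^{α₁β₂+α₂β₁}` (exponent in `ℤ₂`) associated to two
`ℤ₂ × ℤ₂` degrees, valued in a commutative ring `R`. -/
def gradedSign (R : Type*) [CommRing R] (α β : ZMod 2 × ZMod 2) : R :=
  if α.1 * β.2 + α.2 * β.1 = 1 then -1 else 1

lemma gradedSign_symm (R : Type*) [CommRing R] (α β : ZMod 2 × ZMod 2) :
    gradedSign R α β = gradedSign R β α := by
  unfold gradedSign
  have : α.1 * β.2 + α.2 * β.1 = β.1 * α.2 + β.2 * α.1 := by ring
  rw [this]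

lemma gradedSign_mul_self (R : Type*) [CommRing R] (α β : ZMod 2 × ZMod 2) :
    gradedSign R α β * gradedSign R α β = 1 := by
  unfold gradedSign
  split_ifs <;> ring

lemma gradedSign_add_right (R : Type*) [CommRing R] (α β γ : ZMod 2 × ZMod 2) :
    gradedSign R α (β + γ) = gradedSign R α β * gradedSign R α γ := by
  have h : ∀ x : ZMod 2, x = 0 ∨ x = 1 := by decide
  unfold gradedSign
  rcases h α.1 with h1 | h1 <;> rcases h α.2 with h2 | h2 <;>
    rcases h β.1 with h3 | h3 <;> rcases h β.2 with h4 | h4 <;>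
    rcases h γ.1 with h5 | h5 <;> rcases h γ.2 with h6 | h6 <;>
    simp only [Prod.fst_add, Prod.snd_add, h1, h2, h3, h4, h5, h6] <;>
    norm_num <;>
    first
      | rfl
      | (intro hx; exact absurd (by decide) hx)
      | (intro hx; exact absurd hx (by decide))

lemma gradedSign_self (R : Type*) [CommRing R] (β : ZMod 2 × ZMod 2) :
    gradedSign R β β = 1 := by
  have h : ∀ x : ZMod 2, x = 0 ∨ x = 1 := by decide
  unfold gradedSign
  rcases h β.1 with h1 | h1 <;> rcases h β.2 with h2 | h2 <;>
    simp only [h1, h2] <;>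
    norm_num <;>
    first
      | rfl
      | (intro hx; exact absurd (by decide) hx)
      | (intro hx; exact absurd hx (by decide))

/-- **Adjoint invariance of the trace form (Proposition A.2(iii)).**  For
degrees `a + b + c = m` and matrices `A, B, C, M` with `M` graded-commuting with
each of `A, B, C`, one has
`tr((A·B − σ(a,b)·B·A)·M·C) = σ(b,m)·tr(A·M·(B·C − σ(b,c)·C·B))`. -/
theorem trace_form_adjoint_invariant
    {R : Type*} [CommRing R] {n : ℕ}
    (a b c m : ZMod 2 × ZMod 2) (habc : a + b + c = m)
    (A B C M : Matrix (Fin n) (Fin n) R)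
    (hA : M * A = gradedSign R m a • (A * M))
    (hB : M * B = gradedSign R m b • (B * M))
    (hC : M * C = gradedSign R m c • (C * M)) :
    Matrix.trace ((A * B - gradedSign R a b • (B * A)) * M * C)
      = gradedSign R b m *
          Matrix.trace (A * M * (B * C - gradedSign R b c • (C * B))) := by
  set sab := gradedSign R a b with hsab
  set sbc := gradedSign R b c with hsbc
  set sbm := gradedSign R b m with hsbm
  set smb := gradedSign R m b with hsmb
  -- key sign identities
  have hsymm : sbm = smb := gradedSign_symm R b m
  have hsq : sbm * smb = 1 := by rw [hsymm]; exact gradedSign_mul_self R m b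
  have hkey : sbm * sbc = sab := by
    have : sbm = sab * sbc := by
      rw [hsbm, ← habc, gradedSign_add_right, gradedSign_add_right,
        gradedSign_self, mul_one, gradedSign_symm R b a, hsab, hsbc]
    rw [this, mul_assoc, hsbc, gradedSign_mul_self, mul_one]
  -- trace computations
  have h1 : Matrix.trace (A * M * (B * C)) = smb * Matrix.trace (A * B * M * C) := by
    have : A * M * (B * C) = smb • (A * B * M * C) := by
      calc A * M * (B * C) = A * (M * B) * C := by noncomm_ring
        _ = A * (smb • (B * M)) * C := by rw [hB]
        _ = smb • (A * B * M * C) := by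
            simp only [mul_smul_comm, smul_mul_assoc]; noncomm_ring
    rw [this, Matrix.trace_smul, smul_eq_mul]
  have h2 : Matrix.trace (A * M * (C * B)) = Matrix.trace (B * A * M * C) := by
    rw [show A * M * (C * B) = (A * M * C) * B by noncomm_ring,
      Matrix.trace_mul_comm, show B * (A * M * C) = B * A * M * C by noncomm_ring]
  have expandL : Matrix.trace ((A * B - sab • (B * A)) * M * C)
      = Matrix.trace (A * B * M * C) - sab * Matrix.trace (B * A * M * C) := by
    rw [show (A * B - sab • (B * A)) * M * C
        = A * B * M * C - sab • (B * A * M * C) by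
          simp only [sub_mul, smul_mul_assoc, mul_assoc]]
    rw [Matrix.trace_sub, Matrix.trace_smul, smul_eq_mul]
  have expandR : Matrix.trace (A * M * (B * C - sbc • (C * B)))
      = Matrix.trace (A * M * (B * C)) - sbc * Matrix.trace (A * M * (C * B)) := by
    rw [show A * M * (B * C - sbc • (C * B))
        = A * M * (B * C) - sbc • (A * M * (C * B)) by
          simp only [mul_sub, mul_smul_comm]]
    rw [Matrix.trace_sub, Matrix.trace_smul, smul_eq_mul]
  rw [expandL, expandR, h1, h2, mul_sub]
  rw [show sbm * (smb * Matrix.trace (A * B * M * C))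
      = (sbm * smb) * Matrix.trace (A * B * M * C) by ring, hsq, one_mul]
  rw [show sbm * (sbc * Matrix.trace (B * A * M * C))
      = (sbm * sbc) * Matrix.trace (B * A * M * C) by ring, hkey]
end
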